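/- arXiv:2308.06184 — 2 statements merged into one kernel-verified Lean document; each statement's English description precedes it below -/
import Mathlib

section
/- Define V : ℝ × (0,1) → ℝ⁴ by V(s,t) = (s, (2t−1)(s²−1), −2s/√(t(1−t)), (2t−1)/√(t(1−t))). Then V is injective, and V is an exact Lagrangian parametrization with primitive f(s,t) = −4·(s²−1)·√(t(1−t)): at every (s,t) ∈ ℝ × (0,1), writing V = (x₁,x₂,ξ₁,ξ₂), one has ξ₁·(∂x₁/∂s) + ξ₂·(∂x₂/∂s) = ∂f/∂s (both sides equal −8s·√(t(1−t))) and ξ₁·(∂x₁/∂t) + ξ₂·(∂x₂/∂t) = ∂f/∂t (both sides equal 2(s²−1)(2t−1)/√(t(1−t))). -/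
/-!
The first coordinate of `V` recovers `s`, and `ξ₂ = (2t−1)/√(t(1−t))` recovers `t`: since
`(2t−1)² = 1 − 4t(1−t)`, its square is `1/(t(1−t)) − 4`, which determines `t(1−t)`, and then
`ξ₂ · √(t(1−t)) = 2t − 1`. The same identity gives exactness in the `s`-direction,
`−2s + 2s(2t−1)² = −8s · t(1−t)`; in the `t`-direction it is immediate, as `x₁` does not depend on `t`.
-/

/-- The local model `L₁` of the conjugate Lagrangian filling in the vertex-reduction
move: `V(s,t) = (s, (2t−1)(s²−1), −2s/√(t(1−t)), (2t−1)/√(t(1−t)))`. -/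
noncomputable def vertexRedModel (p : ℝ × ℝ) : ℝ × ℝ × ℝ × ℝ :=
  (p.1, (2 * p.2 - 1) * (p.1 ^ 2 - 1),
   -2 * p.1 / Real.sqrt (p.2 * (1 - p.2)),
   (2 * p.2 - 1) / Real.sqrt (p.2 * (1 - p.2)))

open Real Set

lemma mul_one_sub_pos {t : ℝ} (ht : t ∈ Ioo (0 : ℝ) 1) : 0 < t * (1 - t) :=
  mul_pos ht.1 (sub_pos.2 ht.2)

lemma hasDerivAt_sqrt_mul_one_sub {t : ℝ} (ht : t * (1 - t) ≠ 0) :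
    HasDerivAt (fun t' : ℝ => √(t' * (1 - t'))) ((1 - 2 * t) / (2 * √(t * (1 - t)))) t := by
  have hpoly : HasDerivAt (fun t' : ℝ => t' * (1 - t')) (1 - 2 * t) t :=
    ((hasDerivAt_id' t).mul ((hasDerivAt_id' t).const_sub 1)).congr_deriv (by ring)
  exact ((hasDerivAt_sqrt ht).comp t hpoly).congr_deriv (by ring)

lemma two_mul_sub_one_div_sqrt_sq {t : ℝ} (ht : t ∈ Ioo (0 : ℝ) 1) :
    ((2 * t - 1) / √(t * (1 - t))) ^ 2 = (t * (1 - t))⁻¹ - 4 := by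
  have hpos := mul_one_sub_pos ht
  rw [div_pow, sq_sqrt hpos.le, eq_sub_iff_add_eq, div_add' _ _ _ hpos.ne', inv_eq_one_div]
  ring_nf

lemma injOn_two_mul_sub_one_div_sqrt :
    InjOn (fun t : ℝ => (2 * t - 1) / √(t * (1 - t))) (Ioo 0 1) := by
  intro t ht v hv h
  have hprod : t * (1 - t) = v * (1 - v) := by
    have := congrArg (· ^ 2) h
    simp only [two_mul_sub_one_div_sqrt_sq ht, two_mul_sub_one_div_sqrt_sq hv] at this
    exact inv_injective (sub_left_injective this)
  simp only [hprod] at h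
  have := (div_left_inj' (sqrt_pos.2 (mul_one_sub_pos hv)).ne').1 h
  linarith

lemma injOn_vertexRedModel : InjOn vertexRedModel (univ ×ˢ Ioo (0 : ℝ) 1) := by
  rintro ⟨s, t⟩ ⟨-, ht⟩ ⟨s', t'⟩ ⟨-, ht'⟩ h
  simp only [vertexRedModel, Prod.mk.injEq] at h
  exact Prod.ext h.1 (injOn_two_mul_sub_one_div_sqrt ht ht' h.2.2.2)

/-- `V` is injective on `ℝ × (0,1)` and is an exact Lagrangian
parametrization with primitive `f(s,t) = −4(s²−1)√(t(1−t))`: in the `s`-direction both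
sides of `Φ*λ_st = df` equal `−8s√(t(1−t))`, and in the `t`-direction both sides equal
`2(s²−1)(2t−1)/√(t(1−t))`. -/
theorem vertexRedModel_injective_exact :
    Set.InjOn vertexRedModel (Set.univ ×ˢ Set.Ioo (0 : ℝ) 1) ∧
    ∀ s t : ℝ, t ∈ Set.Ioo (0 : ℝ) 1 →
      ((-2 * s / Real.sqrt (t * (1 - t))) * deriv (fun s' : ℝ => s') s
          + ((2 * t - 1) / Real.sqrt (t * (1 - t))) *
            deriv (fun s' : ℝ => (2 * t - 1) * (s' ^ 2 - 1)) s
        = deriv (fun s' : ℝ => -4 * (s' ^ 2 - 1) * Real.sqrt (t * (1 - t))) s) ∧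
      (deriv (fun s' : ℝ => -4 * (s' ^ 2 - 1) * Real.sqrt (t * (1 - t))) s
        = -8 * s * Real.sqrt (t * (1 - t))) ∧
      ((-2 * s / Real.sqrt (t * (1 - t))) * deriv (fun _ : ℝ => s) t
          + ((2 * t - 1) / Real.sqrt (t * (1 - t))) *
            deriv (fun t' : ℝ => (2 * t' - 1) * (s ^ 2 - 1)) t
        = deriv (fun t' : ℝ => -4 * (s ^ 2 - 1) * Real.sqrt (t' * (1 - t'))) t) ∧
      (deriv (fun t' : ℝ => -4 * (s ^ 2 - 1) * Real.sqrt (t' * (1 - t'))) t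
        = 2 * (s ^ 2 - 1) * (2 * t - 1) / Real.sqrt (t * (1 - t))) := by
  refine ⟨injOn_vertexRedModel, fun s t ht => ?_⟩
  have hpos := mul_one_sub_pos ht
  have hf_s : deriv (fun s' : ℝ => -4 * (s' ^ 2 - 1) * √(t * (1 - t))) s
      = -8 * s * √(t * (1 - t)) := by
    rw [((((hasDerivAt_pow 2 s).sub_const 1).const_mul (-4)).mul_const (√(t * (1 - t)))).deriv]
    ring
  have hf_t : deriv (fun t' : ℝ => -4 * (s ^ 2 - 1) * √(t' * (1 - t'))) t
      = 2 * (s ^ 2 - 1) * (2 * t - 1) / √(t * (1 - t)) := by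
    rw [((hasDerivAt_sqrt_mul_one_sub hpos.ne').const_mul (-4 * (s ^ 2 - 1))).deriv]
    field_simp
    ring
  have hx₂_s : deriv (fun s' : ℝ => (2 * t - 1) * (s' ^ 2 - 1)) s = (2 * t - 1) * (2 * s) := by
    simp
  have hx₂_t : deriv (fun t' : ℝ => (2 * t' - 1) * (s ^ 2 - 1)) t = 2 * (s ^ 2 - 1) := by
    simp
  refine ⟨?_, hf_s, ?_, hf_t⟩
  · rw [hf_s, hx₂_s, deriv_id'']
    have hr : √(t * (1 - t)) ≠ 0 := (sqrt_pos.2 hpos).ne'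
    field_simp
    rw [sq_sqrt hpos.le]
    ring
  · rw [hf_t, hx₂_t, deriv_const]
    ring
end

section
/- Let k be a field and V a k-vector space. Let V_{i−1}, V_i, V′_i, V_{i+1} be subspaces with V_{i−1} ⊂ V_i ⊂ V_{i+1}, V_{i−1} ⊂ V′_i ⊂ V_{i+1}, finrank V_{i−1} = i−1, finrank V_i = finrank V′_i = i, finrank V_{i+1} = i+1, and V_i ≠ V′_i. Given nonzero volume forms ω_{i−1} ∈ ⋀^{i−1} V_{i−1}, ω_i ∈ ⋀^{i} V_i, and ω_{i+1} ∈ ⋀^{i+1} V_{i+1} (regarded in the exterior powers of V), there exists a unique ω′_i ∈ ⋀^{i} V′_i such that for some v ∈ V_i and v′ ∈ V′_i: ω_{i−1} ∧ v = ω_i, ω_{i−1} ∧ v′ = ω′_i, and ω_{i−1} ∧ v ∧ v′ = ω_{i+1}. Moreover this ω′_i is nonzero. -/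
/-!
A nonzero `ω ∈ ⋀^m W` with `dim W = m` is a nonzero multiple of `w₁ ∧ ⋯ ∧ w_m` for a basis of
`W`, because every alternating map on `W` is a multiple of the determinant. Hence `ω ∧ x = 0`
exactly when `x ∈ W`, and if `W ≤ W'` with `dim W' = m + 1` and `x ∈ W' \ W`, every element of
`⋀^{m+1} W'` is `ω ∧ c x` for some scalar `c`.

Since `B ≠ B'` are hyperplanes of `C` through `A`, `B ∩ B' = A`. Picking `v₀ ∈ B \ A` and
`v₀' ∈ B' \ A` (so `v₀' ∉ B`) gives `ωB = ωA ∧ c v₀` and `ωC = ωB ∧ d v₀'`, so `ωA ∧ d v₀'` is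
compatible. For two compatible choices `v₁', v₂'`, `ωB ∧ (v₁' - v₂') = ωC - ωC = 0`, so
`v₁' - v₂' ∈ B ∩ B' = A` and `ωA ∧ v₁' = ωA ∧ v₂'`. Finally `ωA ∧ v' = 0` would give
`ωC = ωA ∧ v ∧ v' = -(ωA ∧ v') ∧ v = 0`.
-/

/-- The image of the `m`-th exterior power `⋀^m W` of a subspace `W ≤ V` inside the
exterior algebra of `V`, under the canonical map induced by the inclusion `W → V`. -/
noncomputable def extPowerImage (k : Type*) [Field k] {V : Type*} [AddCommGroup V]
    [Module k V] (m : ℕ) (W : Submodule k V) : Submodule k (ExteriorAlgebra k V) :=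
  (Submodule.map (ExteriorAlgebra.ι k (M := V)) W) ^ m

theorem AlternatingMap.apply_eq_basis_det_smul {R M N ι : Type*} [CommRing R] [AddCommGroup M]
    [Module R M] [AddCommGroup N] [Module R N] [Fintype ι] [DecidableEq ι]
    (e : Module.Basis ι R M) (f : M [⋀^ι]→ₗ[R] N) (v : ι → M) : f v = e.det v • f e := by
  suffices f = e.det.smulRight (f e) from congr($this v)
  refine e.ext_alternating fun i hi => ?_
  let σ : Equiv.Perm ι := Equiv.ofBijective i (Finite.injective_iff_bijective.1 hi)
  change f (e ∘ σ) = e.det.smulRight (f e) (e ∘ σ)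
  simp [AlternatingMap.map_perm, Module.Basis.det_self]

theorem ExteriorAlgebra.ιMulti_snoc {R M : Type*} [CommRing R] [AddCommGroup M] [Module R M]
    {m : ℕ} (b : Fin m → M) (x : M) :
    ιMulti R (m + 1) (Fin.snoc b x) = ιMulti R m b * ι R x := by
  have : ιMulti R 1 ![x] = ι R x := by simp [ιMulti_succ_apply, ιMulti_zero_apply]
  rw [← this, ιMulti_mul_ιMulti, Fin.snoc_eq_append]
  rfl

section LinearAlgebra

open Submodule Set

variable {K V : Type*} [DivisionRing K] [AddCommGroup V] [Module K V]

theorem span_range_eq_of_linearIndependent {m : ℕ} {b : Fin m → V} (hb : LinearIndependent K b)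
    {W : Submodule K V} [FiniteDimensional K W] (hbW : ∀ i, b i ∈ W)
    (hW : Module.finrank K W = m) : span K (range b) = W :=
  eq_of_le_of_finrank_eq (span_le.mpr (range_subset_iff.mpr hbW))
    (by rw [finrank_span_eq_card hb, Fintype.card_fin, hW])

theorem exists_linearIndependent_span_eq {m : ℕ} (W : Submodule K V) [FiniteDimensional K W]
    (hW : Module.finrank K W = m) :
    ∃ b : Fin m → V, LinearIndependent K b ∧ span K (range b) = W := by
  let e := Module.finBasisOfFinrankEq K W hW
  have he : LinearIndependent K (W.subtype ∘ e) := e.linearIndependent.map' _ W.ker_subtype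
  exact ⟨_, he, span_range_eq_of_linearIndependent he (fun i => (e i).2) hW⟩

theorem Submodule.inf_eq_of_finrank_eq_succ {n : ℕ} {A B B' : Submodule K V}
    [FiniteDimensional K B] [FiniteDimensional K B'] (hAB : A ≤ B) (hAB' : A ≤ B')
    (hA : Module.finrank K A = n) (hB : Module.finrank K B = n + 1)
    (hB' : Module.finrank K B' = n + 1) (hne : B ≠ B') : B ⊓ B' = A := by
  have hlt : B ⊓ B' < B := inf_le_left.lt_of_ne fun h =>
    hne (eq_of_le_of_finrank_eq (inf_eq_left.mp h) (hB.trans hB'.symm))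
  have := finrank_lt_finrank_of_lt hlt
  exact (eq_of_le_of_finrank_le (le_inf hAB hAB') (by omega)).symm

end LinearAlgebra

section ExtPowerImage

open ExteriorAlgebra Submodule Set

variable {k V : Type*} [Field k] [AddCommGroup V] [Module k V]

theorem ExteriorAlgebra.ιMulti_ne_zero_of_linearIndependent {m : ℕ} {b : Fin m → V}
    (hb : LinearIndependent k b) : ιMulti k m b ≠ 0 := by
  let s : powersetCard (Fin m) m := ⟨Finset.univ, by simp⟩
  have hs : powersetCard.ofFinEmbEquiv.symm s = RelEmbedding.refl _ :=
    (Finset.orderEmbOfFin_unique' _ fun _ => Finset.mem_univ _).symm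
  have := (exteriorPower.ιMulti_family_linearIndependent_field (n := m) hb).ne_zero s
  rw [exteriorPower.ιMulti_family, hs] at this
  exact fun h => this (Subtype.ext h)

theorem ExteriorAlgebra.ιMulti_mul_ι_eq_zero_iff {m : ℕ} {b : Fin m → V}
    (hb : LinearIndependent k b) {x : V} : ιMulti k m b * ι k x = 0 ↔ x ∈ span k (range b) := by
  rw [← ιMulti_snoc]
  refine ⟨fun h => ?_, fun hx => ?_⟩
  · by_contra hx
    exact ιMulti_ne_zero_of_linearIndependent (linearIndependent_finSnoc.mpr ⟨hb, hx⟩) h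
  · exact AlternatingMap.map_linearDependent _ _ fun h => (linearIndependent_finSnoc.mp h).2 hx

theorem extPowerImage_eq_map_exteriorPower (m : ℕ) (W : Submodule k V) :
    extPowerImage k m W = (⋀[k]^m W).map (ExteriorAlgebra.map W.subtype).toLinearMap := by
  rw [extPowerImage, exteriorPower, Submodule.map_pow, LinearMap.range_eq_map, ← map_comp,
    map_comp_ι, map_comp, map_subtype_top]

theorem extPowerImage_mono (m : ℕ) {W W' : Submodule k V} (h : W ≤ W') :
    extPowerImage k m W ≤ extPowerImage k m W' :=
  pow_le_pow_left' (map_mono h) m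

theorem mul_ι_mem_extPowerImage {m : ℕ} {W : Submodule k V} {ω : ExteriorAlgebra k V}
    (hω : ω ∈ extPowerImage k m W) {x : V} (hx : x ∈ W) :
    ω * ι k x ∈ extPowerImage k (m + 1) W := by
  rw [extPowerImage, pow_succ]
  exact mul_mem_mul hω (mem_map_of_mem hx)

theorem extPowerImage_span_range_le {m : ℕ} {b : Fin m → V} (hb : LinearIndependent k b) :
    extPowerImage k m (span k (range b)) ≤ k ∙ ιMulti k m b := by
  let e := Module.Basis.span hb
  have he : (span k (range b)).subtype ∘ e = b :=
    funext fun i => by simp [e, Module.Basis.span_apply]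
  rw [extPowerImage_eq_map_exteriorPower, map_le_iff_le_comap, ← ιMulti_span_fixedDegree, span_le]
  rintro _ ⟨u, rfl⟩
  rw [SetLike.mem_coe, mem_comap, AlternatingMap.apply_eq_basis_det_smul e, LinearMap.map_smul,
    AlgHom.toLinearMap_apply, map_apply_ιMulti, he]
  exact smul_mem _ _ (mem_span_singleton_self _)

theorem exists_eq_smul_ιMulti {m : ℕ} {W : Submodule k V} [FiniteDimensional k W]
    (hW : Module.finrank k W = m) {ω : ExteriorAlgebra k V} (hω : ω ∈ extPowerImage k m W) :
    ∃ b : Fin m → V, LinearIndependent k b ∧ span k (range b) = W ∧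
      ∃ c : k, ω = c • ιMulti k m b := by
  obtain ⟨b, hb, rfl⟩ := exists_linearIndependent_span_eq W hW
  obtain ⟨c, rfl⟩ := mem_span_singleton.mp (extPowerImage_span_range_le hb hω)
  exact ⟨b, hb, rfl, c, rfl⟩

theorem mul_ι_eq_zero_iff {m : ℕ} {W : Submodule k V} [FiniteDimensional k W]
    (hW : Module.finrank k W = m) {ω : ExteriorAlgebra k V} (hω : ω ∈ extPowerImage k m W)
    (hω0 : ω ≠ 0) {x : V} : ω * ι k x = 0 ↔ x ∈ W := by
  obtain ⟨b, hb, rfl, c, rfl⟩ := exists_eq_smul_ιMulti hW hω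
  have hc : c ≠ 0 := by rintro rfl; simp at hω0
  rw [smul_mul_assoc, smul_eq_zero, or_iff_right hc, ιMulti_mul_ι_eq_zero_iff hb]

theorem exists_mul_ι_smul_eq {m : ℕ} {W W' : Submodule k V} [FiniteDimensional k W']
    (hWW' : W ≤ W') (hW : Module.finrank k W = m) (hW' : Module.finrank k W' = m + 1)
    {ω ω' : ExteriorAlgebra k V} (hω : ω ∈ extPowerImage k m W) (hω0 : ω ≠ 0)
    (hω' : ω' ∈ extPowerImage k (m + 1) W') {x : V} (hxW' : x ∈ W') (hxW : x ∉ W) :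
    ∃ c : k, ω * ι k (c • x) = ω' := by
  have := Submodule.finiteDimensional_of_le hWW'
  obtain ⟨b, hb, rfl, c, rfl⟩ := exists_eq_smul_ιMulti hW hω
  have hc : c ≠ 0 := by rintro rfl; simp at hω0
  have hbx : LinearIndependent k (Fin.snoc b x) := linearIndependent_finSnoc.mpr ⟨hb, hxW⟩
  have hspan : span k (range (Fin.snoc b x)) = W' :=
    span_range_eq_of_linearIndependent hbx
      (Fin.lastCases (by simpa using hxW') fun i => by simpa using hWW' (subset_span ⟨i, rfl⟩)) hW'
  obtain ⟨d, rfl⟩ := mem_span_singleton.mp (extPowerImage_span_range_le hbx (hspan ▸ hω'))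
  refine ⟨d / c, ?_⟩
  rw [map_smul, smul_mul_smul_comm, ιMulti_snoc, mul_div_cancel₀ _ hc]

end ExtPowerImage

/-- unique compatible decoration: Let `A ⊂ B ⊂ C` and `A ⊂ B′ ⊂ C` be
subspaces with `finrank A = n`, `finrank B = finrank B′ = n + 1`,
`finrank C = n + 2`, and `B ≠ B′`. Given nonzero volume forms `ωA ∈ ⋀^n A`,
`ωB ∈ ⋀^{n+1} B`, `ωC ∈ ⋀^{n+2} C`, there exists a unique `ω′ ∈ ⋀^{n+1} B′` such that
for some `v ∈ B`, `v′ ∈ B′`: `ωA ∧ v = ωB`, `ωA ∧ v′ = ω′` and `ωA ∧ v ∧ v′ = ωC`;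
moreover this `ω′` is nonzero. -/
theorem unique_compatible_decoration (k : Type*) [Field k] (V : Type*)
    [AddCommGroup V] [Module k V] (n : ℕ) (A B B' C : Submodule k V)
    (hAB : A ≤ B) (hBC : B ≤ C) (hAB' : A ≤ B') (hB'C : B' ≤ C)
    [FiniteDimensional k C]
    (hA : Module.finrank k A = n) (hB : Module.finrank k B = n + 1)
    (hB' : Module.finrank k B' = n + 1) (hC : Module.finrank k C = n + 2)
    (hne : B ≠ B')
    (ωA ωB ωC : ExteriorAlgebra k V)
    (hωA : ωA ∈ extPowerImage k n A) (hωA0 : ωA ≠ 0)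
    (hωB : ωB ∈ extPowerImage k (n + 1) B) (hωB0 : ωB ≠ 0)
    (hωC : ωC ∈ extPowerImage k (n + 2) C) (hωC0 : ωC ≠ 0) :
    (∃! ω' : ExteriorAlgebra k V,
      ω' ∈ extPowerImage k (n + 1) B' ∧
      ∃ v ∈ B, ∃ v' ∈ B',
        ωA * ExteriorAlgebra.ι k v = ωB ∧
        ωA * ExteriorAlgebra.ι k v' = ω' ∧
        ωA * ExteriorAlgebra.ι k v * ExteriorAlgebra.ι k v' = ωC) ∧
    (∀ ω' : ExteriorAlgebra k V,
      (ω' ∈ extPowerImage k (n + 1) B' ∧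
      ∃ v ∈ B, ∃ v' ∈ B',
        ωA * ExteriorAlgebra.ι k v = ωB ∧
        ωA * ExteriorAlgebra.ι k v' = ω' ∧
        ωA * ExteriorAlgebra.ι k v * ExteriorAlgebra.ι k v' = ωC) → ω' ≠ 0) := by
  have := Submodule.finiteDimensional_of_le hBC
  have := Submodule.finiteDimensional_of_le hB'C
  have := Submodule.finiteDimensional_of_le hAB
  have hBB' : B ⊓ B' = A := Submodule.inf_eq_of_finrank_eq_succ hAB hAB' hA hB hB' hne
  obtain ⟨v₀, hv₀B, hv₀A⟩ := SetLike.exists_of_lt (hAB.lt_of_ne (by rintro rfl; omega))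
  obtain ⟨v₀', hv₀'B', hv₀'A⟩ := SetLike.exists_of_lt (hAB'.lt_of_ne (by rintro rfl; omega))
  have hv₀'B : v₀' ∉ B := fun h => hv₀'A (hBB' ▸ ⟨h, hv₀'B'⟩)
  obtain ⟨c, hc⟩ := exists_mul_ι_smul_eq hAB hA hB hωA hωA0 hωB hv₀B hv₀A
  obtain ⟨d, hd⟩ := exists_mul_ι_smul_eq hBC hB hC hωB hωB0 hωC (hB'C hv₀'B') hv₀'B
  refine ⟨existsUnique_of_exists_of_unique ?_ ?_, ?_⟩
  · exact ⟨_, mul_ι_mem_extPowerImage (extPowerImage_mono n hAB' hωA) (B'.smul_mem d hv₀'B'),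
      _, B.smul_mem c hv₀B, _, B'.smul_mem d hv₀'B', hc, rfl, by rw [hc, hd]⟩
  · rintro _ _ ⟨-, w₁, -, w₁', hw₁', hB₁, rfl, hC₁⟩ ⟨-, w₂, -, w₂', hw₂', hB₂, rfl, hC₂⟩
    rw [hB₁] at hC₁
    rw [hB₂] at hC₂
    have hdiff : w₁' - w₂' ∈ A := by
      refine hBB' ▸ ⟨(mul_ι_eq_zero_iff hB hωB hωB0).mp ?_, B'.sub_mem hw₁' hw₂'⟩
      rw [map_sub, mul_sub, hC₁, hC₂, sub_self]
    rw [← sub_eq_zero, ← mul_sub, ← map_sub]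
    exact (mul_ι_eq_zero_iff hA hωA hωA0).mpr hdiff
  · rintro _ ⟨-, w, -, w', -, -, rfl, hC⟩ h0
    refine hωC0 ?_
    rw [← hC, mul_assoc, eq_neg_of_add_eq_zero_left (ExteriorAlgebra.ι_add_mul_swap w w'),
      mul_neg, ← mul_assoc, h0, zero_mul, neg_zero]
end
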